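/- In the category of Hilbert spaces and injective linear contractions, the sequential diagram ℂ → ℂ → ℂ → ⋯ in which each map is scalar multiplication by 1/2 has no colimit. -/

import Mathlib

open CategoryTheory CategoryTheory.Limits

/-- The category of complex Hilbert spaces and injective linear contractions. -/
structure HilbMonoCat : Type 1 where
  carrier : Type
  [nacg : NormedAddCommGroup carrier]
  [ips : InnerProductSpace ℂ carrier]
  [cs : CompleteSpace carrier]

attribute [instance] HilbMonoCat.nacg HilbMonoCat.ips HilbMonoCat.cs

instance : Category HilbMonoCat where
  Hom A B := { f : A.carrier →L[ℂ] B.carrier // ‖f‖ ≤ 1 ∧ Function.Injective f }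
  id A := ⟨ContinuousLinearMap.id ℂ A.carrier,
    ContinuousLinearMap.norm_id_le, fun _ _ h => h⟩
  comp f g := ⟨g.1.comp f.1,
    le_trans (ContinuousLinearMap.opNorm_comp_le _ _)
      (mul_le_one₀ g.2.1 (norm_nonneg _) f.2.1),
    g.2.2.comp f.2.2⟩
  id_comp f := Subtype.ext (ContinuousLinearMap.comp_id _)
  comp_id f := Subtype.ext (ContinuousLinearMap.id_comp _)
  assoc f g h := rfl

noncomputable def Cobj : HilbMonoCat := ⟨ℂ⟩

noncomputable def halfMap : Cobj ⟶ Cobj :=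
  ⟨(2⁻¹ : ℂ) • ContinuousLinearMap.id ℂ ℂ,
    by
      have key : ‖(2⁻¹ : ℂ) • ContinuousLinearMap.id ℂ ℂ‖ ≤ 1 := by
        rw [norm_smul, ContinuousLinearMap.norm_id]
        norm_num
      exact key,
    by
      have key : Function.Injective ((2⁻¹ : ℂ) • ContinuousLinearMap.id ℂ ℂ) := by
        intro x y h
        have h' : (2⁻¹ : ℂ) • x = (2⁻¹ : ℂ) • y := by
          simpa [ContinuousLinearMap.smul_apply] using h
        exact smul_right_injective ℂ (by norm_num : (2⁻¹ : ℂ) ≠ 0) h'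
      exact key⟩

/-!
Along the diagram, the leg at `0` factors through the leg at `n` after scaling by `2⁻ⁿ`;
as every leg is a contraction, `‖ι₀ x‖ ≤ 2⁻ⁿ ‖x‖` for all `n`, so `ι₀ = 0`, contradicting
injectivity. Hence the diagram has no cocone at all, let alone a colimit.
-/

namespace HilbMonoCat

variable {A B : HilbMonoCat}

theorem norm_hom_apply_le (f : A ⟶ B) (x : A.carrier) : ‖f.1 x‖ ≤ ‖x‖ :=
  (f.1.le_opNorm x).trans (mul_le_of_le_one_left (norm_nonneg x) f.2.1)

theorem hom_apply_eq_zero_iff (f : A ⟶ B) {x : A.carrier} : f.1 x = 0 ↔ x = 0 :=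
  ⟨fun h => (injective_iff_map_eq_zero f.1).mp f.2.2 x h, fun h => h ▸ map_zero f.1⟩

end HilbMonoCat

open HilbMonoCat

section HalvingCocone

variable (c : Cocone (Functor.ofSequence fun _ : ℕ => halfMap))

theorem halvingCocone_ι_zero_apply (n : ℕ) (x : ℂ) :
    (c.ι.app 0).1 x = (c.ι.app n).1 ((2⁻¹ ^ n * x : ℂ)) := by
  induction n with
  | zero => rw [pow_zero, one_mul]
  | succ n ih =>
    have hw := c.w (homOfLE (Nat.le_succ n))
    rw [Functor.ofSequence_map_homOfLE_succ] at hw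
    have hscale : (2⁻¹ * (2⁻¹ ^ n * x) : ℂ) = 2⁻¹ ^ (n + 1) * x := by ring
    rw [ih, ← hw]
    -- `(halfMap ≫ g).1 y` unfolds to `g.1 (2⁻¹ * y)`
    exact congrArg (c.ι.app (n + 1)).1 hscale

theorem norm_halvingCocone_ι_zero_apply_le (n : ℕ) (x : ℂ) :
    ‖(c.ι.app 0).1 x‖ ≤ 2⁻¹ ^ n * ‖x‖ :=
  calc ‖(c.ι.app 0).1 x‖ = ‖(c.ι.app n).1 (2⁻¹ ^ n * x)‖ :=
        congrArg norm (halvingCocone_ι_zero_apply c n x)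
    _ ≤ ‖(2⁻¹ : ℂ) ^ n * x‖ := norm_hom_apply_le _ _
    _ = 2⁻¹ ^ n * ‖x‖ := by simp

theorem halvingCocone_ι_zero_apply_eq_zero (x : ℂ) : (c.ι.app 0).1 x = 0 := by
  have hlim : Filter.Tendsto (fun n : ℕ => (2⁻¹ : ℝ) ^ n * ‖x‖) Filter.atTop (nhds 0) := by
    simpa using (tendsto_pow_atTop_nhds_zero_of_lt_one (r := (2⁻¹ : ℝ))
      (by norm_num) (by norm_num)).mul_const ‖x‖
  exact norm_le_zero_iff.mp <|
    ge_of_tendsto hlim (Filter.Eventually.of_forall (norm_halvingCocone_ι_zero_apply_le c · x))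

end HalvingCocone

instance : IsEmpty (Cocone (Functor.ofSequence fun _ : ℕ => halfMap)) :=
  ⟨fun c => one_ne_zero (α := ℂ) <|
    (hom_apply_eq_zero_iff (c.ι.app 0)).mp (halvingCocone_ι_zero_apply_eq_zero c 1)⟩

/-- In the category of Hilbert spaces and injective linear contractions, the sequential
diagram `ℂ → ℂ → ℂ → ⋯` in which each map is multiplication by `1/2` has no colimit. -/
theorem stmt_18 : ¬ HasColimit (Functor.ofSequence (fun _ : ℕ => halfMap)) :=
  fun _ => isEmptyElim (colimit.cocone (Functor.ofSequence fun _ : ℕ => halfMap))
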